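/- Let α, β ∈ ℂ ∖ {−1, −2, −3, …} with Re α + Re β > −1 and let φ : 𝕋 → ℂ be integrable. Then for every z ∈ 𝔻, ‖DP_{α,β}[φ](z)‖ ≤ |c_{α,β}| · ( |α+1| + |β+1| + |α||z| + |β||z| ) / (1 − |z|²) · (1/2π) ∫₀^{2π} |u_{α,β}(z e^{−it})| · |φ(e^{it})| dt. -/

import Mathlib

open MeasureTheory

noncomputable section

/-- The function `u_{α,β}(z) = (1-|z|²)^{α+β+1} (1-z)^{-(α+1)} (1-conj z)^{-(β+1)}`. -/
def uab (α β : ℂ) (z : ℂ) : ℂ :=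
  (((1 : ℝ) - ‖z‖ ^ 2 : ℝ) : ℂ) ^ (α + β + 1) *
    (1 - z) ^ (-(α + 1)) * (1 - (starRingEnd ℂ) z) ^ (-(β + 1))

/-- The normalizing constant `c_{α,β} = Γ(α+1)Γ(β+1)/Γ(α+β+1)`. -/
def cab (α β : ℂ) : ℂ :=
  Complex.Gamma (α + 1) * Complex.Gamma (β + 1) / Complex.Gamma (α + β + 1)

/-- The `(α,β)`-Poisson integral of `φ`. -/
def Pab (α β : ℂ) (φ : ℂ → ℂ) (z : ℂ) : ℂ :=
  cab α β * ((1 / (2 * Real.pi) : ℝ) : ℂ) *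
    ∫ t in (0 : ℝ)..(2 * Real.pi),
      uab α β (z * Complex.exp (-(Complex.I * t))) * φ (Complex.exp (Complex.I * t))

/-- Wirtinger derivative `∂f = (f_x - i f_y)/2`. -/
def wdz (f : ℂ → ℂ) : ℂ → ℂ := fun z =>
  (fderiv ℝ f z 1 - Complex.I * fderiv ℝ f z Complex.I) / 2

/-- Wirtinger derivative `∂̄f = (f_x + i f_y)/2`. -/
def wdzbar (f : ℂ → ℂ) : ℂ → ℂ := fun z =>
  (fderiv ℝ f z 1 + Complex.I * fderiv ℝ f z Complex.I) / 2

/-- `‖Df(z)‖ = |∂f(z)| + |∂̄f(z)|`. -/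
def normD (f : ℂ → ℂ) (z : ℂ) : ℝ :=
  ‖wdz f z‖ + ‖wdzbar f z‖

/-- `α` is not a negative integer. -/
def notNegInt (α : ℂ) : Prop := ∀ n : ℕ, α ≠ -((n : ℂ) + 1)

end

noncomputable def Complex.abs : AbsoluteValue ℂ ℝ where
  toFun x := ‖x‖
  map_mul' := norm_mul
  nonneg' := norm_nonneg
  eq_zero' _ := norm_eq_zero
  add_le' := norm_add_le

theorem Complex.norm_eq_abs (z : ℂ) : ‖z‖ = Complex.abs z := rfl

theorem Complex.abs_conj (z : ℂ) : Complex.abs ((starRingEnd ℂ) z) = Complex.abs z :=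
  Complex.norm_conj z

theorem Complex.abs_ofReal (r : ℝ) : Complex.abs (r : ℂ) = |r| :=
  (Complex.norm_real r).trans (Real.norm_eq_abs r)

theorem Complex.continuous_abs : Continuous Complex.abs := continuous_norm

theorem Complex.sq_abs (z : ℂ) : Complex.abs z ^ 2 = Complex.normSq z := Complex.sq_norm z

theorem Complex.abs_re_le_abs (z : ℂ) : |z.re| ≤ Complex.abs z := Complex.abs_re_le_norm z

theorem Complex.abs_exp (z : ℂ) : Complex.abs (Complex.exp z) = Real.exp z.re :=
  Complex.norm_exp z

noncomputable section S7
open Complex ComplexConjugate ContinuousLinearMap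

def ppc (α β w : ℂ) : ℂ :=
  uab α β w * (((α+1) * (1 - conj w) - β * conj w * (1 - w)) / ((1 - w * conj w) * (1 - w)))

def qqc (α β w : ℂ) : ℂ :=
  uab α β w * (((β+1) * (1 - w) - α * w * (1 - conj w)) / ((1 - w * conj w) * (1 - conj w)))

def MM (α β w : ℂ) : ℂ →L[ℝ] ℂ :=
  ppc α β w • ContinuousLinearMap.id ℝ ℂ + qqc α β w • (Complex.conjCLE : ℂ →L[ℝ] ℂ)

lemma MM_apply (α β w v : ℂ) : MM α β w v = ppc α β w * v + qqc α β w * conj v := by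
  simp [MM, Complex.conjCLE_apply, smul_eq_mul]

lemma uab_eq (α β : ℂ) :
    uab α β = fun x : ℂ => ((1 : ℂ) - x * conj x) ^ (α + β + 1) *
      (1 - x) ^ (-(α + 1)) * (1 - conj x) ^ (-(β + 1)) := by
  funext x
  have : (((1 : ℝ) - ‖x‖ ^ 2 : ℝ) : ℂ) = 1 - x * conj x := by
    rw [Complex.mul_conj, ← Complex.sq_norm]
    push_cast
    ring
  rw [uab, this]

lemma one_sub_mem_slitPlane {w : ℂ} (hw : Complex.abs w < 1) :
    (1 - w) ∈ Complex.slitPlane := by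
  rw [Complex.mem_slitPlane_iff]
  left
  have := Complex.abs_re_le_abs w
  simp only [Complex.sub_re, Complex.one_re]
  cases abs_le.mp this; linarith

lemma one_sub_mul_conj_pos {w : ℂ} (hw : Complex.abs w < 1) :
    (1 : ℂ) - w * conj w ∈ Complex.slitPlane := by
  rw [Complex.mem_slitPlane_iff]
  left
  rw [Complex.mul_conj]
  simp only [Complex.sub_re, Complex.one_re, Complex.ofReal_re]
  have : Complex.normSq w < 1 := by
    rw [← Complex.sq_abs]; nlinarith [Complex.abs.nonneg w]
  linarith

lemma hasFDerivAt_conj (w : ℂ) :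
    HasFDerivAt (fun x : ℂ => conj x) (Complex.conjCLE : ℂ →L[ℝ] ℂ) w :=
  (Complex.conjCLE : ℂ →L[ℝ] ℂ).hasFDerivAt

lemma hasFDerivAt_uab (α β : ℂ) {w : ℂ} (hw : Complex.abs w < 1) :
    HasFDerivAt (uab α β) (MM α β w) w := by
  have hX : ((1 : ℂ) - w * conj w) ≠ 0 := Complex.slitPlane_ne_zero (one_sub_mul_conj_pos hw)
  have hY : (1 - w) ≠ 0 := Complex.slitPlane_ne_zero (one_sub_mem_slitPlane hw)
  have hwc : Complex.abs (conj w) < 1 := by rwa [Complex.abs_conj]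
  have hZ : (1 - conj w) ≠ 0 := Complex.slitPlane_ne_zero (one_sub_mem_slitPlane hwc)
  have hconj : Continuous (fun x : ℂ => conj x) := Complex.continuous_conj
  -- inner derivatives
  have hmul : HasFDerivAt (fun x : ℂ => x * conj x)
      (w • (Complex.conjCLE : ℂ →L[ℝ] ℂ) + conj w • ContinuousLinearMap.id ℝ ℂ) w :=
    (hasFDerivAt_id w).mul (hasFDerivAt_conj w)
  have hg : HasFDerivAt (fun x : ℂ => (1 : ℂ) - x * conj x)
      (-(w • (Complex.conjCLE : ℂ →L[ℝ] ℂ) + conj w • ContinuousLinearMap.id ℝ ℂ)) w :=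
    hmul.const_sub 1
  have hA : HasFDerivAt (fun x : ℂ => ((1:ℂ) - x * conj x) ^ (α + β + 1))
      (((α+β+1) * ((1:ℂ) - w * conj w) ^ (α+β+1-1)) •
        (-(w • (Complex.conjCLE : ℂ →L[ℝ] ℂ) + conj w • ContinuousLinearMap.id ℝ ℂ))) w := by
    exact (Complex.hasStrictDerivAt_cpow_const
      (one_sub_mul_conj_pos hw)).hasDerivAt.comp_hasFDerivAt w hg
  have hgB : HasFDerivAt (fun x : ℂ => (1 : ℂ) - x) (-(ContinuousLinearMap.id ℝ ℂ)) w :=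
    (hasFDerivAt_id w).const_sub 1
  have hB : HasFDerivAt (fun x : ℂ => (1 - x) ^ (-(α+1)))
      ((-(α+1) * (1 - w) ^ (-(α+1)-1)) • (-(ContinuousLinearMap.id ℝ ℂ))) w :=
    (Complex.hasStrictDerivAt_cpow_const
      (one_sub_mem_slitPlane hw)).hasDerivAt.comp_hasFDerivAt w hgB
  have hgC : HasFDerivAt (fun x : ℂ => (1 : ℂ) - conj x)
      (-(Complex.conjCLE : ℂ →L[ℝ] ℂ)) w :=
    (hasFDerivAt_conj w).const_sub 1
  have hC : HasFDerivAt (fun x : ℂ => (1 - conj x) ^ (-(β+1)))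
      ((-(β+1) * (1 - conj w) ^ (-(β+1)-1)) • (-(Complex.conjCLE : ℂ →L[ℝ] ℂ))) w :=
    (Complex.hasStrictDerivAt_cpow_const
      (one_sub_mem_slitPlane hwc)).hasDerivAt.comp_hasFDerivAt (f := fun x : ℂ => 1 - conj x) w hgC
  have htot := (hA.mul hB).mul hC
  rw [uab_eq]
  refine htot.congr_fderiv ?_
  ext v
  simp only [MM_apply, ContinuousLinearMap.add_apply, ContinuousLinearMap.smul_apply,
    ContinuousLinearMap.neg_apply, ContinuousLinearMap.id_apply, ContinuousLinearMap.coe_smul',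
    Pi.smul_apply, Complex.conjCLE_apply, smul_eq_mul, ppc, qqc, uab_eq,
    ContinuousLinearEquiv.coe_coe, Pi.mul_apply]
  rw [Complex.cpow_sub _ _ hX, Complex.cpow_sub _ _ hY, Complex.cpow_sub _ _ hZ,
    Complex.cpow_one, Complex.cpow_one, Complex.cpow_one]
  field_simp
  ring

lemma continuousAt_uab (α β : ℂ) {w : ℂ} (hw : Complex.abs w < 1) :
    ContinuousAt (uab α β) w :=
  (hasFDerivAt_uab α β hw).continuousAt

lemma continuousAt_ppc (α β : ℂ) {w : ℂ} (hw : Complex.abs w < 1) :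
    ContinuousAt (fun w => ppc α β w) w := by
  have hX : ((1 : ℂ) - w * conj w) ≠ 0 := Complex.slitPlane_ne_zero (one_sub_mul_conj_pos hw)
  have hY : (1 - w) ≠ 0 := Complex.slitPlane_ne_zero (one_sub_mem_slitPlane hw)
  have hconj : Continuous (fun x : ℂ => conj x) := Complex.continuous_conj
  exact (continuousAt_uab α β hw).mul <| ContinuousAt.div
    (by fun_prop) (by fun_prop) (by simp [hX, hY])

lemma continuousAt_qqc (α β : ℂ) {w : ℂ} (hw : Complex.abs w < 1) :
    ContinuousAt (fun w => qqc α β w) w := by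
  have hX : ((1 : ℂ) - w * conj w) ≠ 0 := Complex.slitPlane_ne_zero (one_sub_mul_conj_pos hw)
  have hwc : Complex.abs (conj w) < 1 := by rwa [Complex.abs_conj]
  have hZ : (1 - conj w) ≠ 0 := Complex.slitPlane_ne_zero (one_sub_mem_slitPlane hwc)
  have hconj : Continuous (fun x : ℂ => conj x) := Complex.continuous_conj
  exact (continuousAt_uab α β hw).mul <| ContinuousAt.div
    (by fun_prop) (by fun_prop) (by simp [hX, hZ])

lemma base_eq (w : ℂ) : (((1:ℝ) - Complex.abs w ^ 2 : ℝ) : ℂ) = 1 - w * conj w := by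
  rw [Complex.mul_conj, ← Complex.sq_abs]
  push_cast
  ring

lemma abs_one_sub_mul_conj {w : ℂ} (hw : Complex.abs w < 1) :
    Complex.abs ((1:ℂ) - w * conj w) = 1 - Complex.abs w ^ 2 := by
  have hw2 : (0:ℝ) < 1 - Complex.abs w ^ 2 := by nlinarith [Complex.abs.nonneg w]
  rw [← base_eq, Complex.abs_ofReal, abs_of_pos hw2]

lemma abs_one_sub_conj (w : ℂ) :
    Complex.abs (1 - conj w) = Complex.abs (1 - w) := by
  have : (1 : ℂ) - conj w = conj (1 - w) := by
    simp [map_sub]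
  rw [this, Complex.abs_conj]

lemma abs_ppc_le (α β : ℂ) {w : ℂ} (hw : Complex.abs w < 1) :
    Complex.abs (ppc α β w) ≤ Complex.abs (uab α β w) *
      ((Complex.abs (α+1) + Complex.abs β * Complex.abs w) / (1 - Complex.abs w ^ 2)) := by
  have hw2 : (0:ℝ) < 1 - Complex.abs w ^ 2 := by nlinarith [Complex.abs.nonneg w]
  have hY : (1 - w) ≠ 0 := Complex.slitPlane_ne_zero (one_sub_mem_slitPlane hw)
  have hYpos : 0 < Complex.abs (1 - w) := by simpa [Complex.abs.pos_iff] using hY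
  have hNum : Complex.abs ((α+1) * (1 - conj w) - β * conj w * (1 - w))
      ≤ (Complex.abs (α+1) + Complex.abs β * Complex.abs w) * Complex.abs (1 - w) := by
    calc Complex.abs ((α+1) * (1 - conj w) - β * conj w * (1 - w))
        ≤ Complex.abs ((α+1) * (1 - conj w)) + Complex.abs (β * conj w * (1 - w)) := by
          simpa only [← Complex.norm_eq_abs] using norm_sub_le _ _
      _ = Complex.abs (α+1) * Complex.abs (1 - w)
          + Complex.abs β * Complex.abs w * Complex.abs (1 - w) := by
          rw [map_mul, map_mul, map_mul, abs_one_sub_conj, Complex.abs_conj]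
      _ = (Complex.abs (α+1) + Complex.abs β * Complex.abs w) * Complex.abs (1 - w) := by ring
  rw [ppc, map_mul, map_div₀, map_mul, abs_one_sub_mul_conj hw]
  refine mul_le_mul_of_nonneg_left ?_ (Complex.abs.nonneg _)
  rw [div_le_div_iff₀ (by positivity) hw2]
  nlinarith [hw2.le, Complex.abs.nonneg ((α+1) * (1 - conj w) - β * conj w * (1 - w))]

lemma abs_qqc_le (α β : ℂ) {w : ℂ} (hw : Complex.abs w < 1) :
    Complex.abs (qqc α β w) ≤ Complex.abs (uab α β w) *
      ((Complex.abs (β+1) + Complex.abs α * Complex.abs w) / (1 - Complex.abs w ^ 2)) := by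
  have hw2 : (0:ℝ) < 1 - Complex.abs w ^ 2 := by nlinarith [Complex.abs.nonneg w]
  have hwc : Complex.abs (conj w) < 1 := by rwa [Complex.abs_conj]
  have hZ : (1 - conj w) ≠ 0 := Complex.slitPlane_ne_zero (one_sub_mem_slitPlane hwc)
  have hZpos : 0 < Complex.abs (1 - conj w) := by simpa [Complex.abs.pos_iff] using hZ
  have hNum : Complex.abs ((β+1) * (1 - w) - α * w * (1 - conj w))
      ≤ (Complex.abs (β+1) + Complex.abs α * Complex.abs w) * Complex.abs (1 - conj w) := by
    calc Complex.abs ((β+1) * (1 - w) - α * w * (1 - conj w))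
        ≤ Complex.abs ((β+1) * (1 - w)) + Complex.abs (α * w * (1 - conj w)) := by
          simpa only [← Complex.norm_eq_abs] using norm_sub_le _ _
      _ = Complex.abs (β+1) * Complex.abs (1 - conj w)
          + Complex.abs α * Complex.abs w * Complex.abs (1 - conj w) := by
          rw [map_mul, map_mul, map_mul, abs_one_sub_conj]
      _ = (Complex.abs (β+1) + Complex.abs α * Complex.abs w) * Complex.abs (1 - conj w) := by
          ring
  rw [qqc, map_mul, map_div₀, map_mul, abs_one_sub_mul_conj hw]
  refine mul_le_mul_of_nonneg_left ?_ (Complex.abs.nonneg _)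
  rw [div_le_div_iff₀ (by positivity) hw2]
  nlinarith [hw2.le, Complex.abs.nonneg ((β+1) * (1 - w) - α * w * (1 - conj w))]

def FF (α β : ℂ) (φ : ℂ → ℂ) (x : ℂ) (t : ℝ) : ℂ :=
  uab α β (x * Complex.exp (-(Complex.I * t))) * φ (Complex.exp (Complex.I * t))

def PPt (α β : ℂ) (φ : ℂ → ℂ) (x : ℂ) (t : ℝ) : ℂ :=
  ppc α β (x * Complex.exp (-(Complex.I * t))) * Complex.exp (-(Complex.I * t)) *
    φ (Complex.exp (Complex.I * t))

def QQt (α β : ℂ) (φ : ℂ → ℂ) (x : ℂ) (t : ℝ) : ℂ :=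
  qqc α β (x * Complex.exp (-(Complex.I * t))) * Complex.exp (Complex.I * t) *
    φ (Complex.exp (Complex.I * t))

def FF' (α β : ℂ) (φ : ℂ → ℂ) (x : ℂ) (t : ℝ) : ℂ →L[ℝ] ℂ :=
  PPt α β φ x t • ContinuousLinearMap.id ℝ ℂ + QQt α β φ x t • (Complex.conjCLE : ℂ →L[ℝ] ℂ)

lemma abs_exp_neg_I (t : ℝ) : Complex.abs (Complex.exp (-(Complex.I * t))) = 1 := by
  rw [Complex.abs_exp]
  simp

lemma conj_exp_neg_I (t : ℝ) :
    conj (Complex.exp (-(Complex.I * t))) = Complex.exp (Complex.I * t) := by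
  rw [← Complex.exp_conj]
  simp [Complex.conj_ofReal]

lemma hasFDerivAt_FF (α β : ℂ) (φ : ℂ → ℂ) (t : ℝ) {x : ℂ} (hx : Complex.abs x < 1) :
    HasFDerivAt (fun y => FF α β φ y t) (FF' α β φ x t) x := by
  set e := Complex.exp (-(Complex.I * t)) with he
  have habs_e : Complex.abs e = 1 := abs_exp_neg_I t
  have hw : Complex.abs (x * e) < 1 := by rw [map_mul, habs_e, mul_one]; exact hx
  have hlin : HasFDerivAt (fun y : ℂ => y * e) (e • ContinuousLinearMap.id ℝ ℂ) x := by
    simpa using (hasFDerivAt_id x).mul_const e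
  have hcomp : HasFDerivAt (fun y : ℂ => uab α β (y * e))
      ((MM α β (x * e)).comp (e • ContinuousLinearMap.id ℝ ℂ)) x :=
    by have := (hasFDerivAt_uab α β hw).comp x hlin; exact this
  have hmul := hcomp.mul_const (φ (Complex.exp (Complex.I * t)))
  have hEq : FF' α β φ x t = φ (Complex.exp (Complex.I * t)) •
      ((MM α β (x * e)).comp (e • ContinuousLinearMap.id ℝ ℂ)) := by
    ext v
    simp only [FF', PPt, QQt, ContinuousLinearMap.add_apply, ContinuousLinearMap.smul_apply,
      ContinuousLinearMap.coe_smul', Pi.smul_apply, ContinuousLinearMap.coe_comp',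
      Function.comp_apply, ContinuousLinearMap.id_apply, ContinuousLinearEquiv.coe_coe,
      Complex.conjCLE_apply, MM_apply, smul_eq_mul]
    rw [map_mul, conj_exp_neg_I]
    ring
  rw [hEq]
  exact hmul

lemma norm_FF'_le (α β : ℂ) (φ : ℂ → ℂ) (x : ℂ) (t : ℝ) :
    ‖FF' α β φ x t‖ ≤ (Complex.abs (ppc α β (x * Complex.exp (-(Complex.I * t))))
        + Complex.abs (qqc α β (x * Complex.exp (-(Complex.I * t)))))
      * Complex.abs (φ (Complex.exp (Complex.I * t))) := by
  apply ContinuousLinearMap.opNorm_le_bound _ (by positivity)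
  intro v
  simp only [FF', ContinuousLinearMap.add_apply, ContinuousLinearMap.smul_apply,
    ContinuousLinearMap.id_apply, Complex.conjCLE_apply, ContinuousLinearEquiv.coe_coe,
    smul_eq_mul]
  calc ‖PPt α β φ x t * v + QQt α β φ x t * conj v‖
      ≤ ‖PPt α β φ x t * v‖ + ‖QQt α β φ x t * conj v‖ := norm_add_le _ _
    _ = Complex.abs (PPt α β φ x t) * ‖v‖ + Complex.abs (QQt α β φ x t) * ‖v‖ := by
        simp only [norm_mul, Complex.norm_eq_abs, Complex.abs_conj]
    _ ≤ _ := by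
        have hP : Complex.abs (PPt α β φ x t) ≤
            Complex.abs (ppc α β (x * Complex.exp (-(Complex.I * t))))
              * Complex.abs (φ (Complex.exp (Complex.I * t))) := by
          rw [PPt, map_mul, map_mul, abs_exp_neg_I, mul_one]
        have hQ : Complex.abs (QQt α β φ x t) ≤
            Complex.abs (qqc α β (x * Complex.exp (-(Complex.I * t))))
              * Complex.abs (φ (Complex.exp (Complex.I * t))) := by
          rw [QQt, map_mul, map_mul]
          have : Complex.abs (Complex.exp (Complex.I * t)) = 1 := by
            rw [Complex.abs_exp]; simp
          rw [this, mul_one]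
        nlinarith [norm_nonneg v, Complex.abs.nonneg (PPt α β φ x t),
          Complex.abs.nonneg (QQt α β φ x t)]

theorem stmt7 (α β : ℂ) (hα : notNegInt α) (hβ : notNegInt β)
    (hαβ : -1 < (α + β).re) (φ : ℂ → ℂ)
    (hφ : IntervalIntegrable (fun t : ℝ => φ (Complex.exp (Complex.I * t)))
      volume 0 (2 * Real.pi))
    (z : ℂ) (hz : ‖z‖ < 1) :
    normD (Pab α β φ) z ≤
      ‖cab α β‖ *
        ((‖α + 1‖ + ‖β + 1‖ +
            ‖α‖ * ‖z‖ + ‖β‖ * ‖z‖) /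
          (1 - ‖z‖ ^ 2)) *
        ((1 / (2 * Real.pi)) *
          ∫ t in (0 : ℝ)..(2 * Real.pi),
            ‖uab α β (z * Complex.exp (-(Complex.I * t)))‖ *
              ‖φ (Complex.exp (Complex.I * t))‖) := by
  rw [Complex.norm_eq_abs] at hz
  have hπ : (0:ℝ) < 2 * Real.pi := by positivity
  have h02 : (0:ℝ) ≤ 2 * Real.pi := hπ.le
  have hz2 : (0:ℝ) < 1 - Complex.abs z ^ 2 := by nlinarith [Complex.abs.nonneg z]
  set ε : ℝ := (1 - Complex.abs z) / 2 with hεdef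
  have hεpos : 0 < ε := by simp only [hεdef]; linarith
  set r : ℝ := (1 + Complex.abs z) / 2 with hrdef
  have hr1 : r < 1 := by simp only [hrdef]; linarith
  have hr0 : 0 < r := by simp only [hrdef]; positivity
  have hball : ∀ x ∈ Metric.ball z ε, Complex.abs x ≤ r := by
    intro x hx
    rw [Metric.mem_ball, Complex.dist_eq, Complex.norm_eq_abs] at hx
    have : Complex.abs x ≤ Complex.abs (x - z) + Complex.abs z := by
      simpa using Complex.abs.add_le (x - z) z
    simp only [hεdef] at hx
    simp only [hrdef]
    linarith
  -- uniform bound on the compact set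
  set K : Set (ℂ × ℂ) := Metric.closedBall (0:ℂ) r ×ˢ Metric.sphere (0:ℂ) 1 with hKdef
  have hKmem : ∀ p ∈ K, Complex.abs (p.1 * p.2) < 1 := by
    rintro ⟨x, e⟩ hp
    rw [hKdef, Set.mem_prod] at hp
    obtain ⟨h1, h2⟩ := hp
    rw [Metric.mem_closedBall, Complex.dist_eq, sub_zero] at h1
    rw [mem_sphere_iff_norm, sub_zero, Complex.norm_eq_abs] at h2
    rw [map_mul, h2, mul_one]
    exact lt_of_le_of_lt h1 hr1
  have hKcomp : IsCompact K := (isCompact_closedBall _ _).prod (isCompact_sphere _ _)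
  have hgcont : ContinuousOn (fun p : ℂ × ℂ =>
      Complex.abs (ppc α β (p.1 * p.2)) + Complex.abs (qqc α β (p.1 * p.2))) K := by
    intro p hp
    have hmul : ContinuousAt (fun p : ℂ × ℂ => p.1 * p.2) p :=
      (continuous_fst.mul continuous_snd).continuousAt
    have h1 : ContinuousAt (fun q : ℂ × ℂ => ppc α β (q.1 * q.2)) p :=
      ContinuousAt.comp (f := fun q : ℂ × ℂ => q.1 * q.2) (x := p)
        (continuousAt_ppc α β (hKmem p hp)) hmul
    have h2 : ContinuousAt (fun q : ℂ × ℂ => qqc α β (q.1 * q.2)) p :=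
      ContinuousAt.comp (f := fun q : ℂ × ℂ => q.1 * q.2) (x := p)
        (continuousAt_qqc α β (hKmem p hp)) hmul
    exact ((Complex.continuous_abs.continuousAt.comp h1).add
      (Complex.continuous_abs.continuousAt.comp h2)).continuousWithinAt
  obtain ⟨C, hC⟩ := hKcomp.exists_bound_of_continuousOn hgcont
  have hCbd : ∀ x : ℂ, Complex.abs x ≤ r → ∀ t : ℝ,
      Complex.abs (ppc α β (x * Complex.exp (-(Complex.I * t)))) +
        Complex.abs (qqc α β (x * Complex.exp (-(Complex.I * t)))) ≤ C := by
    intro x hx t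
    have hmem : (x, Complex.exp (-(Complex.I * t))) ∈ K := by
      rw [hKdef, Set.mem_prod]
      constructor
      · rw [Metric.mem_closedBall, Complex.dist_eq, sub_zero]; exact hx
      · rw [mem_sphere_iff_norm, sub_zero, Complex.norm_eq_abs]; exact abs_exp_neg_I t
    have := hC _ hmem
    rw [Real.norm_eq_abs] at this
    exact (le_abs_self _).trans this
  set bnd : ℝ → ℝ := fun t => C * ‖φ (Complex.exp (Complex.I * t))‖ with hbnddef
  have hFF'bd : ∀ x : ℂ, Complex.abs x ≤ r → ∀ t : ℝ, ‖FF' α β φ x t‖ ≤ bnd t := by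
    intro x hx t
    refine (norm_FF'_le α β φ x t).trans ?_
    rw [hbnddef]
    simp only [Complex.norm_eq_abs]
    exact mul_le_mul_of_nonneg_right (hCbd x hx t) (Complex.abs.nonneg _)
  -- measurability and continuity facts
  have hIoc : Set.uIoc (0:ℝ) (2*Real.pi) = Set.Ioc 0 (2*Real.pi) := Set.uIoc_of_le h02
  have hφm : AEStronglyMeasurable (fun t : ℝ => φ (Complex.exp (Complex.I * t)))
      (volume.restrict (Set.uIoc (0:ℝ) (2*Real.pi))) := by
    rw [hIoc]; exact hφ.1.aestronglyMeasurable
  have hcont_w : ∀ x : ℂ, Continuous (fun t : ℝ => x * Complex.exp (-(Complex.I * t))) := by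
    intro x
    exact continuous_const.mul (Complex.continuous_exp.comp
      ((continuous_const.mul Complex.continuous_ofReal).neg))
  have hcont_u : ∀ x : ℂ, Complex.abs x < 1 →
      Continuous (fun t : ℝ => uab α β (x * Complex.exp (-(Complex.I * t)))) := by
    intro x hx
    refine continuous_iff_continuousAt.2 fun t => ?_
    have hw : Complex.abs (x * Complex.exp (-(Complex.I * t))) < 1 := by
      rw [map_mul, abs_exp_neg_I, mul_one]; exact hx
    exact ContinuousAt.comp (f := fun t : ℝ => x * Complex.exp (-(Complex.I * t))) (x := t)
      (continuousAt_uab α β hw) (hcont_w x).continuousAt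
  have hcont_pe : ∀ x : ℂ, Complex.abs x < 1 → Continuous (fun t : ℝ =>
      ppc α β (x * Complex.exp (-(Complex.I * t))) * Complex.exp (-(Complex.I * t))) := by
    intro x hx
    refine Continuous.mul ?_ (Complex.continuous_exp.comp
      ((continuous_const.mul Complex.continuous_ofReal).neg))
    refine continuous_iff_continuousAt.2 fun t => ?_
    have hw : Complex.abs (x * Complex.exp (-(Complex.I * t))) < 1 := by
      rw [map_mul, abs_exp_neg_I, mul_one]; exact hx
    exact ContinuousAt.comp (f := fun t : ℝ => x * Complex.exp (-(Complex.I * t))) (x := t)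
      (continuousAt_ppc α β hw) (hcont_w x).continuousAt
  have hcont_qe : ∀ x : ℂ, Complex.abs x < 1 → Continuous (fun t : ℝ =>
      qqc α β (x * Complex.exp (-(Complex.I * t))) * Complex.exp (Complex.I * t)) := by
    intro x hx
    refine Continuous.mul ?_ (Complex.continuous_exp.comp
      (continuous_const.mul Complex.continuous_ofReal))
    refine continuous_iff_continuousAt.2 fun t => ?_
    have hw : Complex.abs (x * Complex.exp (-(Complex.I * t))) < 1 := by
      rw [map_mul, abs_exp_neg_I, mul_one]; exact hx
    exact ContinuousAt.comp (f := fun t : ℝ => x * Complex.exp (-(Complex.I * t))) (x := t)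
      (continuousAt_qqc α β hw) (hcont_w x).continuousAt
  -- hypotheses of dominated differentiation
  have hF_meas : ∀ᶠ x in nhds z, AEStronglyMeasurable (FF α β φ x)
      (volume.restrict (Set.uIoc (0:ℝ) (2*Real.pi))) := by
    filter_upwards [Metric.ball_mem_nhds z hεpos] with x hx
    exact ((hcont_u x ((hball x hx).trans_lt hr1)).aestronglyMeasurable).mul hφm
  have hF_int : IntervalIntegrable (FF α β φ z) volume 0 (2*Real.pi) :=
    hφ.continuousOn_mul (hcont_u z hz).continuousOn
  have hF'_meas : AEStronglyMeasurable (FF' α β φ z)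
      (volume.restrict (Set.uIoc (0:ℝ) (2*Real.pi))) := by
    have h1 : AEStronglyMeasurable (fun t => PPt α β φ z t)
        (volume.restrict (Set.uIoc (0:ℝ) (2*Real.pi))) :=
      ((hcont_pe z hz).aestronglyMeasurable).mul hφm
    have h2 : AEStronglyMeasurable (fun t => QQt α β φ z t)
        (volume.restrict (Set.uIoc (0:ℝ) (2*Real.pi))) :=
      ((hcont_qe z hz).aestronglyMeasurable).mul hφm
    exact (h1.smul aestronglyMeasurable_const).add (h2.smul aestronglyMeasurable_const)
  have h_bound : ∀ᵐ t ∂(volume : Measure ℝ), t ∈ Set.uIoc (0:ℝ) (2*Real.pi) →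
      ∀ x ∈ Metric.ball z ε, ‖FF' α β φ x t‖ ≤ bnd t := by
    refine Filter.Eventually.of_forall fun t _ x hx => ?_
    exact hFF'bd x (hball x hx) t
  have hbnd_int : IntervalIntegrable bnd volume 0 (2*Real.pi) := hφ.norm.const_mul C
  have h_diff : ∀ᵐ t ∂(volume : Measure ℝ), t ∈ Set.uIoc (0:ℝ) (2*Real.pi) →
      ∀ x ∈ Metric.ball z ε, HasFDerivAt (fun y => FF α β φ y t) (FF' α β φ x t) x := by
    refine Filter.Eventually.of_forall fun t _ x hx => ?_
    exact hasFDerivAt_FF α β φ t ((hball x hx).trans_lt hr1)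
  have hMain := intervalIntegral.hasFDerivAt_integral_of_dominated_of_fderiv_le (Metric.ball_mem_nhds z hεpos)
    hF_meas hF_int hF'_meas h_bound hbnd_int h_diff
  -- integrability of the derivative family and components
  have hF'_int : Integrable (FF' α β φ z)
      (volume.restrict (Set.Ioc (0:ℝ) (2*Real.pi))) := by
    refine Integrable.mono' (g := bnd)
      (hbnd_int.1 : IntegrableOn bnd (Set.Ioc 0 (2*Real.pi)) volume)
      (by rw [← hIoc]; exact hF'_meas)
      (Filter.Eventually.of_forall fun t => hFF'bd z (by simp only [hrdef]; linarith) t)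
  have hPPt_int : IntervalIntegrable (PPt α β φ z) volume 0 (2*Real.pi) :=
    hφ.continuousOn_mul (hcont_pe z hz).continuousOn
  have hQQt_int : IntervalIntegrable (QQt α β φ z) volume 0 (2*Real.pi) :=
    hφ.continuousOn_mul (hcont_qe z hz).continuousOn
  set cc : ℂ := cab α β * ((1 / (2 * Real.pi) : ℝ) : ℂ) with hccdef
  have hP : HasFDerivAt (Pab α β φ)
      (cc • ∫ t in (0:ℝ)..(2*Real.pi), FF' α β φ z t) z := hMain.const_mul cc
  have hfd := hP.fderiv
  have hap : ∀ v : ℂ, (∫ t in (0:ℝ)..(2*Real.pi), FF' α β φ z t) v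
      = ∫ t in (0:ℝ)..(2*Real.pi), FF' α β φ z t v := by
    intro v
    rw [intervalIntegral.integral_of_le h02, intervalIntegral.integral_of_le h02]
    exact ContinuousLinearMap.integral_apply hF'_int v
  set S : ℂ := ∫ t in (0:ℝ)..(2*Real.pi), PPt α β φ z t with hSdef
  set T : ℂ := ∫ t in (0:ℝ)..(2*Real.pi), QQt α β φ z t with hTdef
  have e1 : fderiv ℝ (Pab α β φ) z 1 = cc * (S + T) := by
    rw [hfd]
    simp only [ContinuousLinearMap.smul_apply, smul_eq_mul]
    congr 1
    rw [hap 1]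
    have : (fun t => FF' α β φ z t 1) = fun t => PPt α β φ z t + QQt α β φ z t := by
      funext t
      simp [FF', Complex.conjCLE_apply]
    rw [this, intervalIntegral.integral_add hPPt_int hQQt_int]
  have eI : fderiv ℝ (Pab α β φ) z Complex.I = cc * (S * Complex.I - T * Complex.I) := by
    rw [hfd]
    simp only [ContinuousLinearMap.smul_apply, smul_eq_mul]
    congr 1
    rw [hap Complex.I]
    have : (fun t => FF' α β φ z t Complex.I)
        = fun t => PPt α β φ z t * Complex.I - QQt α β φ z t * Complex.I := by
      funext t
      simp [FF', Complex.conjCLE_apply, Complex.conj_I]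
      ring
    rw [this, intervalIntegral.integral_sub (hPPt_int.mul_const _) (hQQt_int.mul_const _),
      intervalIntegral.integral_mul_const, intervalIntegral.integral_mul_const]
  have hwdz : wdz (Pab α β φ) z = cc * S := by
    simp only [wdz, e1, eI]
    linear_combination (-(cc * (S - T))/2) * Complex.I_sq
  have hwdzbar : wdzbar (Pab α β φ) z = cc * T := by
    simp only [wdzbar, e1, eI]
    linear_combination ((cc * (S - T))/2) * Complex.I_sq
  -- final estimates
  have hφabs : IntervalIntegrable (fun t => Complex.abs (φ (Complex.exp (Complex.I * t))))
      volume 0 (2*Real.pi) := by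
    simpa only [Complex.norm_eq_abs] using hφ.norm
  have hJ_int : IntervalIntegrable (fun t =>
      Complex.abs (uab α β (z * Complex.exp (-(Complex.I * t)))) *
        Complex.abs (φ (Complex.exp (Complex.I * t)))) volume 0 (2*Real.pi) :=
    hφabs.continuousOn_mul (Complex.continuous_abs.comp (hcont_u z hz)).continuousOn
  set Cp : ℝ := (Complex.abs (α+1) + Complex.abs β * Complex.abs z) /
      (1 - Complex.abs z ^ 2) with hCpdef
  set Cq : ℝ := (Complex.abs (β+1) + Complex.abs α * Complex.abs z) /
      (1 - Complex.abs z ^ 2) with hCqdef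
  have habsw : ∀ t : ℝ, Complex.abs (z * Complex.exp (-(Complex.I * t))) = Complex.abs z := by
    intro t; rw [map_mul, abs_exp_neg_I, mul_one]
  have hPptw : ∀ t : ℝ, ‖PPt α β φ z t‖ ≤ Cp *
      (Complex.abs (uab α β (z * Complex.exp (-(Complex.I * t)))) *
        Complex.abs (φ (Complex.exp (Complex.I * t)))) := by
    intro t
    have hw : Complex.abs (z * Complex.exp (-(Complex.I * t))) < 1 := by
      rw [habsw t]; exact hz
    have h1 := abs_ppc_le α β hw
    rw [habsw t] at h1
    rw [Complex.norm_eq_abs, PPt, map_mul, map_mul, abs_exp_neg_I, mul_one]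
    calc Complex.abs (ppc α β (z * Complex.exp (-(Complex.I * t)))) *
          Complex.abs (φ (Complex.exp (Complex.I * t)))
        ≤ (Complex.abs (uab α β (z * Complex.exp (-(Complex.I * t)))) * Cp) *
          Complex.abs (φ (Complex.exp (Complex.I * t))) :=
          mul_le_mul_of_nonneg_right h1 (Complex.abs.nonneg _)
      _ = Cp * (Complex.abs (uab α β (z * Complex.exp (-(Complex.I * t)))) *
          Complex.abs (φ (Complex.exp (Complex.I * t)))) := by ring
  have hQqtw : ∀ t : ℝ, ‖QQt α β φ z t‖ ≤ Cq *
      (Complex.abs (uab α β (z * Complex.exp (-(Complex.I * t)))) *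
        Complex.abs (φ (Complex.exp (Complex.I * t)))) := by
    intro t
    have hw : Complex.abs (z * Complex.exp (-(Complex.I * t))) < 1 := by
      rw [habsw t]; exact hz
    have h1 := abs_qqc_le α β hw
    rw [habsw t] at h1
    have habsi : Complex.abs (Complex.exp (Complex.I * t)) = 1 := by
      rw [Complex.abs_exp]; simp
    rw [Complex.norm_eq_abs, QQt, map_mul, map_mul, habsi, mul_one]
    calc Complex.abs (qqc α β (z * Complex.exp (-(Complex.I * t)))) *
          Complex.abs (φ (Complex.exp (Complex.I * t)))
        ≤ (Complex.abs (uab α β (z * Complex.exp (-(Complex.I * t)))) * Cq) *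
          Complex.abs (φ (Complex.exp (Complex.I * t))) :=
          mul_le_mul_of_nonneg_right h1 (Complex.abs.nonneg _)
      _ = Cq * (Complex.abs (uab α β (z * Complex.exp (-(Complex.I * t)))) *
          Complex.abs (φ (Complex.exp (Complex.I * t)))) := by ring
  have hS : Complex.abs S ≤ Cp * ∫ t in (0:ℝ)..(2*Real.pi),
      Complex.abs (uab α β (z * Complex.exp (-(Complex.I * t)))) *
        Complex.abs (φ (Complex.exp (Complex.I * t))) := by
    rw [hSdef, ← Complex.norm_eq_abs]
    refine (intervalIntegral.norm_integral_le_integral_norm h02).trans ?_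
    rw [← intervalIntegral.integral_const_mul]
    exact intervalIntegral.integral_mono_on h02 hPPt_int.norm (hJ_int.const_mul Cp)
      fun t _ => hPptw t
  have hT : Complex.abs T ≤ Cq * ∫ t in (0:ℝ)..(2*Real.pi),
      Complex.abs (uab α β (z * Complex.exp (-(Complex.I * t)))) *
        Complex.abs (φ (Complex.exp (Complex.I * t))) := by
    rw [hTdef, ← Complex.norm_eq_abs]
    refine (intervalIntegral.norm_integral_le_integral_norm h02).trans ?_
    rw [← intervalIntegral.integral_const_mul]
    exact intervalIntegral.integral_mono_on h02 hQQt_int.norm (hJ_int.const_mul Cq)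
      fun t _ => hQqtw t
  have habscc : Complex.abs cc = Complex.abs (cab α β) * (1 / (2 * Real.pi)) := by
    rw [hccdef, map_mul, Complex.abs_ofReal, abs_of_pos (by positivity)]
  have hccnn : (0:ℝ) ≤ Complex.abs cc := Complex.abs.nonneg _
  calc normD (Pab α β φ) z
      = Complex.abs cc * Complex.abs S + Complex.abs cc * Complex.abs T := by
        rw [normD, Complex.norm_eq_abs, Complex.norm_eq_abs, hwdz, hwdzbar, map_mul Complex.abs cc S, map_mul Complex.abs cc T]
    _ ≤ Complex.abs cc * (Cp * ∫ t in (0:ℝ)..(2*Real.pi),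
          Complex.abs (uab α β (z * Complex.exp (-(Complex.I * t)))) *
            Complex.abs (φ (Complex.exp (Complex.I * t))))
        + Complex.abs cc * (Cq * ∫ t in (0:ℝ)..(2*Real.pi),
          Complex.abs (uab α β (z * Complex.exp (-(Complex.I * t)))) *
            Complex.abs (φ (Complex.exp (Complex.I * t)))) := by
        exact add_le_add (mul_le_mul_of_nonneg_left hS hccnn)
          (mul_le_mul_of_nonneg_left hT hccnn)
    _ = Complex.abs (cab α β) *
        ((Complex.abs (α + 1) + Complex.abs (β + 1) +
            Complex.abs α * Complex.abs z + Complex.abs β * Complex.abs z) /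
          (1 - Complex.abs z ^ 2)) *
        ((1 / (2 * Real.pi)) * ∫ t in (0:ℝ)..(2*Real.pi),
          Complex.abs (uab α β (z * Complex.exp (-(Complex.I * t)))) *
            Complex.abs (φ (Complex.exp (Complex.I * t)))) := by
        rw [habscc, hCpdef, hCqdef]
        ring
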